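/- arXiv:2605.25349 — 2 statements merged into one kernel-verified Lean document; each statement's English description precedes it below -/
import Mathlib

section
/- Define the Turán defect $T_N(\psi) = \Phi_{N-1}(\psi)^2 - \Phi_{N-2}(\psi)\Phi_N(\psi)$ where $\Phi_m(\psi) = \sum_{k=0}^m e_k(\psi)$ is the partial sum of elementary symmetric polynomials. Fix a squarefree monomial in the variables $\psi$ with $a'$ variables appearing squared and $r$ variables appearing to the first power, and let $L' = N - a'$. Then the coefficient of this monomial in the polynomial $T_N(\psi)$ equals $\max\{\binom{r}{L'-1} - \binom{r}{L'}, 0\}$; in particular it is nonnegative. -/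
open Finset MvPolynomial

/-- `Φ_m = ∑_{k=0}^m e_k` as a multivariate polynomial, with `Φ_m = 0` for `m < 0`. -/
noncomputable def PhiPoly (σ : Type*) [Fintype σ] [DecidableEq σ] (m : ℤ) :
    MvPolynomial σ ℤ :=
  if m < 0 then 0 else ∑ k ∈ Finset.range (m.toNat + 1), MvPolynomial.esymm σ ℤ k

/-- The Turán defect `T_N = Φ_{N-1}² - Φ_{N-2} Φ_N`. -/
noncomputable def TuranDefect (σ : Type*) [Fintype σ] [DecidableEq σ] (N : ℕ) :
    MvPolynomial σ ℤ :=
  PhiPoly σ ((N : ℤ) - 1) ^ 2 - PhiPoly σ ((N : ℤ) - 2) * PhiPoly σ (N : ℤ)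

/-- Binomial coefficient with integer lower index, `0` outside `{0,…,n}`. -/
def binomZ (n : ℕ) (k : ℤ) : ℤ := if 0 ≤ k then (n.choose k.toNat : ℤ) else 0

/-!
Write `Φ_p = ∑_{#S ≤ p} x^S` and `d = 2·1_A + 1_R` (`A` the squared, `R` the simple variables).
The pairs `(S, T)` with `1_S + 1_T = d` are exactly `(A ∪ U, A ∪ (R \ U))` for `U ⊆ R`, so the
coefficient of `x^d` in `Φ_p Φ_q` is `∑ C(r, u)` over the window `a + u ≤ p`, `a + r - u ≤ q`.
With `L = N - a`, the two windows `[r - L + 1, L - 1]` and `[r - L, L - 2]` occurring in `T_N`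
differ only at their ends, leaving `C(r, L - 1) - C(r, r - L)` when `r + 2 ≤ 2L` and `0` otherwise;
unimodality of `C(r, ·)` turns this into the `max`.
-/

lemma binomZ_nonneg (n : ℕ) (k : ℤ) : 0 ≤ binomZ n k := by
  unfold binomZ; split <;> positivity

lemma binomZ_eq_zero_of_lt (n : ℕ) {k : ℤ} (h : n < k) : binomZ n k = 0 := by
  rw [binomZ, if_pos (by omega), Nat.choose_eq_zero_of_lt (by omega), Nat.cast_zero]

lemma binomZ_symm (n : ℕ) (k : ℤ) : binomZ n (n - k) = binomZ n k := by
  rcases lt_or_ge (n : ℤ) k with h | h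
  · rw [binomZ_eq_zero_of_lt n h, binomZ, if_neg (by omega)]
  rcases lt_or_ge k 0 with h' | h'
  · rw [binomZ_eq_zero_of_lt n (by omega), binomZ, if_neg (by omega)]
  rw [binomZ, binomZ, if_pos (by omega), if_pos h', ← Nat.choose_symm (k := k.toNat) (by omega)]
  congr 3
  omega

lemma binomZ_mul_eq_sub_one_mul (n : ℕ) (k : ℤ) :
    binomZ n k * k = binomZ n (k - 1) * (n - k + 1) := by
  rcases le_or_gt k 0 with h | h
  · have hk1 : binomZ n (k - 1) = 0 := if_neg (by omega)
    rcases h.lt_or_eq with hk | rfl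
    · rw [hk1, show binomZ n k = 0 from if_neg (by omega), zero_mul, zero_mul]
    · rw [hk1, mul_zero, zero_mul]
  obtain ⟨m, rfl⟩ : ∃ m : ℕ, k = m + 1 := ⟨(k - 1).toNat, by omega⟩
  rcases le_or_gt m n with hm | hm
  · rw [binomZ, binomZ, if_pos (by omega), if_pos (by omega)]
    simp only [add_sub_cancel_right, Int.toNat_natCast, show ((m : ℤ) + 1).toNat = m + 1 by omega]
    rw [show (n : ℤ) - (m + 1) + 1 = ((n - m : ℕ) : ℤ) by omega]
    exact_mod_cast Nat.choose_succ_right_eq n m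
  · rw [binomZ_eq_zero_of_lt n (by omega), binomZ_eq_zero_of_lt n (by omega), zero_mul, zero_mul]

lemma binomZ_sub_one_le (n : ℕ) {k : ℤ} (h : 2 * k ≤ n + 1) :
    binomZ n (k - 1) ≤ binomZ n k := by
  rcases le_or_gt k 0 with hk | hk
  · rw [binomZ, if_neg (by omega)]
    exact binomZ_nonneg n k
  nlinarith [binomZ_mul_eq_sub_one_mul n k, binomZ_nonneg n (k - 1)]

lemma binomZ_le_sub_one (n : ℕ) {k : ℤ} (h : n + 1 ≤ 2 * k) :
    binomZ n k ≤ binomZ n (k - 1) := by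
  nlinarith [binomZ_mul_eq_sub_one_mul n k, binomZ_nonneg n (k - 1), binomZ_nonneg n k]

lemma sum_range_ite_choose_eq_binomZ (n : ℕ) (k : ℤ) :
    ∑ u ∈ range (n + 1), (if (u : ℤ) = k then (n.choose u : ℤ) else 0) = binomZ n k := by
  rcases lt_or_ge k 0 with h | h
  · rw [binomZ, if_neg (by omega)]
    exact sum_eq_zero fun u _ => if_neg (by omega)
  lift k to ℕ using h
  simp only [Nat.cast_inj, sum_ite_eq', mem_range, binomZ, Nat.cast_nonneg, if_true,
    Int.toNat_natCast]
  split_ifs with hk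
  · rfl
  · rw [Nat.choose_eq_zero_of_lt (by omega), Nat.cast_zero]

lemma sum_range_choose_window_sub_eq_max (r : ℕ) (L : ℤ) :
    ∑ u ∈ range (r + 1),
        ((if (u : ℤ) ≤ L - 1 ∧ (r : ℤ) - u ≤ L - 1 then (r.choose u : ℤ) else 0) -
          (if (u : ℤ) ≤ L - 2 ∧ (r : ℤ) - u ≤ L then (r.choose u : ℤ) else 0)) =
      max (binomZ r (L - 1) - binomZ r L) 0 := by
  by_cases hL : r + 2 ≤ 2 * L
  · have hends : ∀ u : ℕ,
        ((if (u : ℤ) ≤ L - 1 ∧ (r : ℤ) - u ≤ L - 1 then (r.choose u : ℤ) else 0) -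
          (if (u : ℤ) ≤ L - 2 ∧ (r : ℤ) - u ≤ L then (r.choose u : ℤ) else 0)) =
        (if (u : ℤ) = L - 1 then (r.choose u : ℤ) else 0) -
          (if (u : ℤ) = r - L then (r.choose u : ℤ) else 0) := by
      intro u; split_ifs <;> omega
    simp only [hends, sum_sub_distrib, sum_range_ite_choose_eq_binomZ, binomZ_symm]
    exact (max_eq_left (sub_nonneg.2 (binomZ_le_sub_one r (by omega)))).symm
  · rw [max_eq_right (sub_nonpos.2 (binomZ_sub_one_le r (by omega)))]
    refine sum_eq_zero fun u _ => ?_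
    split_ifs <;> omega

lemma Finset.sum_single_apply {σ M : Type*} [DecidableEq σ] [AddCommMonoid M] (S : Finset σ)
    (c : M) (j : σ) : (∑ i ∈ S, Finsupp.single i c) j = if j ∈ S then c else 0 := by
  simp only [Finsupp.finsetSum_apply, Finsupp.single_apply, sum_ite_eq']

section

variable {σ : Type*} [DecidableEq σ]

lemma sum_single_add_sum_single_eq_iff {A R S T : Finset σ} (hAR : Disjoint A R) :
    ∑ i ∈ S, Finsupp.single i 1 + ∑ i ∈ T, Finsupp.single i 1 =
        ∑ i ∈ A, Finsupp.single i 2 + ∑ i ∈ R, Finsupp.single i 1 ↔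
      ∃ U ⊆ R, A ∪ U = S ∧ A ∪ (R \ U) = T := by
  simp only [Finsupp.ext_iff, Finsupp.add_apply, sum_single_apply]
  constructor
  · intro h
    refine ⟨S ∩ R, inter_subset_right, ?_, ?_⟩ <;> ext i <;> have := h i <;>
      grind [disjoint_left]
  · rintro ⟨U, hU, rfl, rfl⟩ i
    grind [disjoint_left]

lemma card_filter_sum_single_add_eq {A R : Finset σ} (hAR : Disjoint A R)
    (s : Finset (Finset σ × Finset σ)) :
    #{x ∈ s | ∑ i ∈ x.1, Finsupp.single i 1 + ∑ i ∈ x.2, Finsupp.single i 1 =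
        ∑ i ∈ A, Finsupp.single i 2 + ∑ i ∈ R, Finsupp.single i 1} =
      #{U ∈ R.powerset | (A ∪ U, A ∪ (R \ U)) ∈ s} := by
  have hfilter : {x ∈ s | ∑ i ∈ x.1, Finsupp.single i 1 + ∑ i ∈ x.2, Finsupp.single i 1 =
        ∑ i ∈ A, Finsupp.single i 2 + ∑ i ∈ R, Finsupp.single i 1} =
      {U ∈ R.powerset | (A ∪ U, A ∪ (R \ U)) ∈ s}.image fun U => (A ∪ U, A ∪ (R \ U)) := by
    ext x
    simp only [mem_filter, mem_image, mem_powerset, sum_single_add_sum_single_eq_iff hAR]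
    grind
  rw [hfilter, card_image_of_injOn]
  intro U hU V hV hUV
  simp only [coe_filter, mem_powerset, Set.mem_ofPred_eq, Prod.mk.injEq] at hU hV hUV
  rw [← union_sdiff_cancel_left (hAR.mono_right hU.1), hUV.1,
    union_sdiff_cancel_left (hAR.mono_right hV.1)]

variable [Fintype σ]

lemma phiPoly_eq_sum_monomial (p : ℤ) :
    PhiPoly σ p = ∑ S : Finset σ with (#S : ℤ) ≤ p, monomial (∑ i ∈ S, Finsupp.single i 1) 1 := by
  unfold PhiPoly
  split_ifs with hp
  · exact (sum_eq_zero fun S hS => absurd (mem_filter.1 hS).2 (by omega)).symm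
  simp_rw [esymm_eq_sum_monomial]
  rw [← sum_fiberwise_of_maps_to (g := card) (t := range (p.toNat + 1))]
  · refine sum_congr rfl fun k hk => sum_congr ?_ fun _ _ => rfl
    ext S
    simp only [mem_range, Order.lt_add_one_iff] at hk
    simp only [mem_powersetCard_univ, mem_filter, mem_univ, true_and]
    omega
  · intro S hS
    simp only [mem_filter, mem_univ, true_and, mem_range, Order.lt_add_one_iff] at hS ⊢
    omega

lemma coeff_phiPoly_mul_phiPoly {A R : Finset σ} (hAR : Disjoint A R) (p q : ℤ) :
    coeff (∑ i ∈ A, Finsupp.single i 2 + ∑ i ∈ R, Finsupp.single i 1)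
        (PhiPoly σ p * PhiPoly σ q) =
      ∑ u ∈ range (#R + 1),
        if (u : ℤ) ≤ p - #A ∧ (#R : ℤ) - u ≤ q - #A then ((#R).choose u : ℤ) else 0 := by
  rw [phiPoly_eq_sum_monomial, phiPoly_eq_sum_monomial, sum_mul_sum, ← sum_product', coeff_sum]
  simp only [monomial_mul, mul_one, coeff_monomial]
  rw [sum_boole, card_filter_sum_single_add_eq hAR, card_filter]
  trans ∑ U ∈ R.powerset, if (#U : ℤ) ≤ p - #A ∧ (#R : ℤ) - #U ≤ q - #A then 1 else 0
  · push_cast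
    refine sum_congr rfl fun U hU => ?_
    rw [mem_powerset] at hU
    have := card_le_card hU
    simp only [mem_product, mem_filter, mem_univ, true_and,
      card_union_of_disjoint (hAR.mono_right hU),
      card_union_of_disjoint (hAR.mono_right sdiff_subset), card_sdiff_of_subset hU]
    congr 1
    exact propext (by omega)
  rw [sum_powerset_apply_card fun m => if (m : ℤ) ≤ p - #A ∧ (#R : ℤ) - m ≤ q - #A then 1 else 0]
  simp only [smul_ite, nsmul_eq_mul, mul_one, smul_zero]

end

/-- The coefficient of a monomial with `a'` squared variables and `r` first-power
variables in the Turán defect `T_N` equals `max (C(r, L'-1) - C(r, L'), 0)` where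
`L' = N - a'`; in particular it is nonnegative. -/
theorem turanDefect_coeff {σ : Type*} [Fintype σ] [DecidableEq σ] (N : ℕ)
    (d : σ →₀ ℕ) (hd : ∀ i, d i ≤ 2) :
    MvPolynomial.coeff d (TuranDefect σ N) =
      max (binomZ ((Finset.univ.filter fun i => d i = 1).card)
            ((N : ℤ) - ((Finset.univ.filter fun i => d i = 2).card : ℤ) - 1)
          - binomZ ((Finset.univ.filter fun i => d i = 1).card)
            ((N : ℤ) - ((Finset.univ.filter fun i => d i = 2).card : ℤ))) 0 := by
  set A : Finset σ := {i | d i = 2}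
  set R : Finset σ := {i | d i = 1}
  have hAR : Disjoint A R := disjoint_filter.2 fun i _ h2 h1 => by omega
  have hdAR : d = ∑ i ∈ A, Finsupp.single i 2 + ∑ i ∈ R, Finsupp.single i 1 := by
    ext i
    have := hd i
    simp only [Finsupp.add_apply, sum_single_apply, A, R, mem_filter, mem_univ, true_and]
    split_ifs <;> omega
  rw [hdAR, TuranDefect, coeff_sub, sq, coeff_phiPoly_mul_phiPoly hAR,
    coeff_phiPoly_mul_phiPoly hAR, ← sum_sub_distrib, ← sum_range_choose_window_sub_eq_max,
    sub_right_comm (N : ℤ) 1, sub_right_comm (N : ℤ) 2]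
end

section
/- Let $L \ge 0$, $b \ge 2$, $a \ge 1$ be integers with $b \le 2L+1$, and set $\rho = 2L+2-b \ge 1$. Then $(\rho+1)\left(2 + \frac{(a-1)(\rho+1)}{L+2}\right) \ge \frac{a\rho^2}{L+1}$. -/
/-- Key scalar inequality: with `L ≥ 0`, `b ≥ 2`, `a ≥ 1`, `b ≤ 2L+1` and
`ρ = 2L+2-b ≥ 1`, one has `(ρ+1)(2 + (a-1)(ρ+1)/(L+2)) ≥ a ρ² / (L+1)`. -/
theorem key_scalar_inequality (L b a : ℕ) (hb : 2 ≤ b) (ha : 1 ≤ a)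
    (hbL : b ≤ 2 * L + 1) :
    ((a : ℝ) * ((2 * (L : ℝ) + 2 - b) ^ 2)) / ((L : ℝ) + 1)
      ≤ ((2 * (L : ℝ) + 2 - b) + 1) *
          (2 + ((a : ℝ) - 1) * ((2 * (L : ℝ) + 2 - b) + 1) / ((L : ℝ) + 2)) := by
  have hL1 : (0:ℝ) < (L:ℝ) + 1 := by positivity
  have hL2 : (0:ℝ) < (L:ℝ) + 2 := by positivity
  have ha' : (1:ℝ) ≤ (a:ℝ) := by exact_mod_cast ha
  have hr1 : (1:ℝ) ≤ 2 * (L:ℝ) + 2 - b := by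
    have : (b:ℝ) ≤ 2 * L + 1 := by exact_mod_cast hbL
    linarith
  have hr2 : 2 * (L:ℝ) + 2 - b ≤ 2 * L := by
    have : (2:ℝ) ≤ (b:ℝ) := by exact_mod_cast hb
    linarith
  set r : ℝ := 2 * (L:ℝ) + 2 - b with hr
  rw [div_le_iff₀ hL1, ← sub_nonneg]
  have e : (r + 1) * (2 + ((a:ℝ) - 1) * (r + 1) / ((L:ℝ) + 2)) * ((L:ℝ) + 1) - a * r ^ 2 =
      ((r + 1) * (2 * ((L:ℝ) + 2) + ((a:ℝ) - 1) * (r + 1)) * ((L:ℝ) + 1)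
        - a * r ^ 2 * ((L:ℝ) + 2)) / ((L:ℝ) + 2) := by
    field_simp
  rw [e]
  apply div_nonneg _ hL2.le
  nlinarith [mul_nonneg (sub_nonneg.2 ha') (sub_nonneg.2 hr1),
    mul_nonneg (sub_nonneg.2 ha') (sub_nonneg.2 hr2),
    mul_nonneg (mul_nonneg (sub_nonneg.2 ha') (sub_nonneg.2 hr1)) (sub_nonneg.2 hr2),
    mul_pos hL1 hL2, sq_nonneg (r - 1), sq_nonneg (2*(L:ℝ) - r)]
end
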